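/- The determinant P_k(θ) can be written as a polynomial Q_k of degree at most k in cos 2π(θ + (k−1)α/2): there exist real coefficients c_0,…,c_k (depending on λ, α, E) such that P_k(θ) = Σ_{j=0}^{k} c_j cos^j 2π(θ + (k−1)α/2) for all θ. -/

import Mathlib

open Real Matrix

/-- The matrix of `R_{[0,k-1]} (H_{λ,α,θ} - E) R_{[0,k-1]}` for the almost Mathieu
operator. -/
noncomputable def amoMat (lam α θ E : ℝ) (k : ℕ) :
    Matrix (Fin k) (Fin k) ℝ := fun i j =>
  (if i = j then 2 * lam * Real.cos (2 * π * (θ + (i : ℕ) * α)) - E else 0) +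
    (if (i : ℕ) + 1 = (j : ℕ) ∨ (j : ℕ) + 1 = (i : ℕ) then 1 else 0)

/-!
Put `φ = θ + (k-1)α/2`. Every entry of the matrix is a trigonometric polynomial of degree at
most one in `2πφ`, so by the Leibniz formula `P_k` is a trigonometric polynomial of degree at
most `k`, i.e. of the form `A (cos 2πφ) + sin 2πφ · B (cos 2πφ)` with `deg A ≤ k`. Reversing the
order of the sites `i ↦ k - 1 - i` conjugates the matrix at `φ` into the matrix at `-φ`, so `P_k`
is even in `φ` and the odd part `sin · B (cos)` vanishes.
-/

open Polynomial

namespace AlmostMathieu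

/-- Trigonometric polynomials of degree at most `m`, i.e. the span of `cos (j x)`, `sin (j x)`
for `j ≤ m`. -/
def trigPolyLE (m : ℕ) : Submodule ℝ (ℝ → ℝ) where
  carrier := {f | ∃ A B : ℝ[X], A.degree ≤ m ∧ B.degree + 1 ≤ m ∧
    f = fun x => A.eval (cos x) + sin x * B.eval (cos x)}
  zero_mem' := ⟨0, 0, by simp, by simp, by ext; simp⟩
  add_mem' := by
    rintro _ _ ⟨A₁, B₁, hA₁, hB₁, rfl⟩ ⟨A₂, B₂, hA₂, hB₂, rfl⟩
    refine ⟨A₁ + A₂, B₁ + B₂, (degree_add_le _ _).trans (max_le hA₁ hA₂), ?_, ?_⟩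
    · calc (B₁ + B₂).degree + 1 ≤ max B₁.degree B₂.degree + 1 := by gcongr; exact degree_add_le _ _
        _ ≤ m := by rw [← max_add_add_right]; exact max_le hB₁ hB₂
    · ext x; simp only [Pi.add_apply, eval_add]; ring
  smul_mem' := by
    rintro a _ ⟨A, B, hA, hB, rfl⟩
    refine ⟨a • A, a • B, (degree_smul_le _ _).trans hA,
      le_trans (by gcongr; exact degree_smul_le _ _) hB, ?_⟩
    ext x; simp only [Pi.smul_apply, eval_smul, smul_eq_mul]; ring

theorem const_mem_trigPolyLE (m : ℕ) (a : ℝ) : (fun _ => a) ∈ trigPolyLE m :=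
  ⟨C a, 0, degree_C_le.trans (mod_cast m.zero_le), by simp, by ext; simp⟩

theorem cos_add_mem_trigPolyLE_one (t : ℝ) : (fun x => cos (x + t)) ∈ trigPolyLE 1 := by
  refine ⟨C (cos t) * X, C (-sin t), by simpa using degree_C_mul_X_le (cos t), ?_, ?_⟩
  · calc (C (-sin t)).degree + 1 ≤ 0 + 1 := by gcongr; exact degree_C_le
      _ = 1 := by simp
  · ext x; simp only [eval_mul, eval_C, eval_X, cos_add]; ring

theorem mul_mem_trigPolyLE {m n : ℕ} {f g : ℝ → ℝ} (hf : f ∈ trigPolyLE m)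
    (hg : g ∈ trigPolyLE n) : f * g ∈ trigPolyLE (m + n) := by
  obtain ⟨A₁, B₁, hA₁, hB₁, rfl⟩ := hf
  obtain ⟨A₂, B₂, hA₂, hB₂, rfl⟩ := hg
  have h2 : (1 - X ^ 2 : ℝ[X]).degree ≤ 2 := by compute_degree
  refine ⟨A₁ * A₂ + (1 - X ^ 2) * (B₁ * B₂), A₁ * B₂ + B₁ * A₂, ?_, ?_, ?_⟩
  · refine (degree_add_le _ _).trans (max_le ?_ ?_)
    · calc (A₁ * A₂).degree ≤ A₁.degree + A₂.degree := degree_mul_le _ _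
        _ ≤ m + n := add_le_add hA₁ hA₂
        _ = (m + n : ℕ) := by push_cast; rfl
    · calc ((1 - X ^ 2) * (B₁ * B₂)).degree ≤ 2 + (B₁.degree + B₂.degree) :=
            (degree_mul_le _ _).trans (add_le_add h2 (degree_mul_le _ _))
        _ = (B₁.degree + 1) + (B₂.degree + 1) := by ring
        _ ≤ m + n := add_le_add hB₁ hB₂
        _ = (m + n : ℕ) := by push_cast; rfl
  · calc (A₁ * B₂ + B₁ * A₂).degree + 1
          ≤ max (A₁.degree + (B₂.degree + 1)) ((B₁.degree + 1) + A₂.degree) := by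
            rw [← add_assoc, add_right_comm B₁.degree, max_add_add_right]
            gcongr
            exact (degree_add_le _ _).trans (max_le_max (degree_mul_le _ _) (degree_mul_le _ _))
      _ ≤ (m + n : ℕ) := by
            push_cast
            exact max_le (add_le_add hA₁ hB₂) (add_le_add hB₁ hA₂)
  · ext x
    simp only [Pi.mul_apply, eval_add, eval_mul, eval_sub, eval_pow, eval_one, eval_X]
    linear_combination (eval (cos x) B₁ * eval (cos x) B₂) * sin_sq x

theorem prod_mem_trigPolyLE {ι : Type*} (s : Finset ι) (f : ι → ℝ → ℝ)
    (hf : ∀ i ∈ s, f i ∈ trigPolyLE 1) : ∏ i ∈ s, f i ∈ trigPolyLE s.card := by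
  classical
  induction s using Finset.induction_on with
  | empty => exact const_mem_trigPolyLE 0 1
  | insert a s ha ih =>
    rw [Finset.prod_insert ha, Finset.card_insert_of_notMem ha, add_comm]
    exact mul_mem_trigPolyLE (hf a (s.mem_insert_self a))
      (ih fun i hi => hf i (Finset.mem_insert_of_mem hi))

theorem det_mem_trigPolyLE {n : Type*} [Fintype n] [DecidableEq n] (M : ℝ → Matrix n n ℝ)
    (hM : ∀ i j, (fun x => M x i j) ∈ trigPolyLE 1) :
    (fun x => (M x).det) ∈ trigPolyLE (Fintype.card n) := by
  have hLeibniz : (fun x => (M x).det) =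
      ∑ σ : Equiv.Perm n, ((Equiv.Perm.sign σ : ℤ) : ℝ) • ∏ i, fun x => M x (σ i) i := by
    ext x
    simp only [det_apply', Finset.sum_apply, Pi.smul_apply, Finset.prod_apply, smul_eq_mul]
  rw [hLeibniz]
  exact Submodule.sum_mem _ fun σ _ =>
    Submodule.smul_mem _ _ (prod_mem_trigPolyLE _ _ fun i _ => hM (σ i) i)

theorem exists_eval_cos_of_even {m : ℕ} {f : ℝ → ℝ} (hf : f ∈ trigPolyLE m)
    (heven : ∀ x, f (-x) = f x) : ∃ A : ℝ[X], A.degree ≤ m ∧ ∀ x, f x = A.eval (cos x) := by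
  obtain ⟨A, B, hA, -, rfl⟩ := hf
  refine ⟨A, hA, fun x => ?_⟩
  have := heven x
  simp only [cos_neg, sin_neg] at this
  linarith

theorem amoMat_entry_mem_trigPolyLE (lam α E c : ℝ) (k : ℕ) (i j : Fin k) :
    (fun x => amoMat lam α (x / (2 * π) - c) E k i j) ∈ trigPolyLE 1 := by
  have harg : ∀ x, 2 * π * (x / (2 * π) - c + (i : ℕ) * α) = x + 2 * π * ((i : ℕ) * α - c) := by
    intro x; field_simp; ring
  simp only [amoMat, harg]
  refine add_mem ?_ (const_mem_trigPolyLE _ _)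
  split_ifs
  · exact sub_mem (Submodule.smul_mem _ (2 * lam) (cos_add_mem_trigPolyLE_one _))
      (const_mem_trigPolyLE _ E)
  · exact const_mem_trigPolyLE _ 0

theorem amoMat_neg_sub (lam α θ E : ℝ) (k : ℕ) :
    amoMat lam α (-θ - ((k : ℝ) - 1) * α) E k = (amoMat lam α θ E k).submatrix Fin.rev Fin.rev := by
  ext i j
  simp only [submatrix_apply, amoMat, Fin.rev_inj, Fin.val_rev]
  congr 1
  · split_ifs with h
    · have hcast : ((k - (i + 1) : ℕ) : ℝ) = k - 1 - i := by
        rw [Nat.cast_sub i.isLt]; push_cast; ring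
      rw [hcast, ← cos_neg]
      ring_nf
    · rfl
  · congr 1
    apply propext
    omega

theorem det_amoMat_neg_sub (lam α θ E : ℝ) (k : ℕ) :
    (amoMat lam α (-θ - ((k : ℝ) - 1) * α) E k).det = (amoMat lam α θ E k).det := by
  rw [amoMat_neg_sub]
  exact det_submatrix_equiv_self Fin.revPerm _

end AlmostMathieu

open AlmostMathieu in
/-- `P_k(θ)` can be written as a polynomial of degree at most `k` in
`cos 2π(θ + (k-1)α/2)`: there exist coefficients `c_0, …, c_k` (depending on
`λ, α, E`) with `P_k(θ) = Σ_{j=0}^{k} c_j cos^j 2π(θ + (k-1)α/2)` for all `θ`. -/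
theorem stmt_11 (lam α E : ℝ) (k : ℕ) :
    ∃ c : Fin (k + 1) → ℝ, ∀ θ : ℝ,
      (amoMat lam α θ E k).det =
        ∑ j : Fin (k + 1), c j * Real.cos (2 * π * (θ + ((k : ℝ) - 1) * α / 2)) ^ (j : ℕ) := by
  set c := ((k : ℝ) - 1) * α / 2
  have hP := det_mem_trigPolyLE _ (amoMat_entry_mem_trigPolyLE lam α E c k)
  rw [Fintype.card_fin] at hP
  have heven : ∀ x, (amoMat lam α (-x / (2 * π) - c) E k).det
      = (amoMat lam α (x / (2 * π) - c) E k).det := fun x => by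
    rw [← det_amoMat_neg_sub lam α (x / (2 * π) - c)]
    congr 2
    ring
  obtain ⟨A, hA, hPA⟩ := exists_eval_cos_of_even hP heven
  refine ⟨fun j => A.coeff j, fun θ => ?_⟩
  have hθ : 2 * π * (θ + c) / (2 * π) - c = θ := by field_simp; ring
  rw [← hθ, hPA, hθ, eval_eq_sum_range' (Nat.lt_succ_of_le (natDegree_le_iff_degree_le.mpr hA)),
    Fin.sum_univ_eq_sum_range (fun j => A.coeff j * cos (2 * π * (θ + c)) ^ j)]
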